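/- Let m = (m₁, m₂, m₃) ∈ R^3 be a unit vector not collinear with e₃ (i.e. m₁² + m₂² > 0), and let c > 0. Then for all x ∈ R^3, |m × x|² + c(x₁² + x₂²) ≥ μ |x|², where μ := min( c/2, (m₁² + m₂²) c / (2 m₃² + c) ) > 0. -/

import Mathlib

/-! Write `s = m₀² + m₁²` and `D = 2m₂² + c`. Multiplied by `2sD`, the defect
`|m × x|² + c(x₀² + x₁²) - μ|x|²` is a sum of two squares plus
`s((x₀² + x₁²) D (c - 2μ) + 2x₂² (sc - Dμ))`, which is nonnegative as soon as
`μ ≤ c/2` and `μ ≤ sc/D`. -/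

open Matrix

/-- Sum of squares of the components of a vector in `ℝ³` (the squared Euclidean norm). -/
def sq3 (u : Fin 3 → ℝ) : ℝ := u 0 ^ 2 + u 1 ^ 2 + u 2 ^ 2

lemma sq3_crossProduct (m x : Fin 3 → ℝ) :
    sq3 (crossProduct m x) =
      (m 1 * x 2 - m 2 * x 1) ^ 2 + (m 2 * x 0 - m 0 * x 2) ^ 2 +
        (m 0 * x 1 - m 1 * x 0) ^ 2 := by
  simp [sq3, cross_apply]

/-- The first square completes the square in the component of `x` along `(m₀, m₁, 0)`. -/
lemma mul_sq3_crossProduct_add_sub_eq (m x : Fin 3 → ℝ) (c μ : ℝ) :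
    2 * (m 0 ^ 2 + m 1 ^ 2) * (2 * m 2 ^ 2 + c) *
        (sq3 (crossProduct m x) + c * (x 0 ^ 2 + x 1 ^ 2) - μ * sq3 x) =
      ((2 * m 2 ^ 2 + c) * (m 0 * x 0 + m 1 * x 1) - 2 * (m 0 ^ 2 + m 1 ^ 2) * m 2 * x 2) ^ 2 +
        (2 * (m 0 ^ 2 + m 1 ^ 2) * (2 * m 2 ^ 2 + c) + (2 * m 2 ^ 2 + c) ^ 2) *
          (m 0 * x 1 - m 1 * x 0) ^ 2 +
        (m 0 ^ 2 + m 1 ^ 2) *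
          ((x 0 ^ 2 + x 1 ^ 2) * (2 * m 2 ^ 2 + c) * (c - 2 * μ) +
            2 * x 2 ^ 2 * ((m 0 ^ 2 + m 1 ^ 2) * c - (2 * m 2 ^ 2 + c) * μ)) := by
  rw [sq3_crossProduct, sq3]
  ring

lemma mul_sq3_le_sq3_crossProduct_add {m : Fin 3 → ℝ} (hnc : 0 < m 0 ^ 2 + m 1 ^ 2)
    {c μ : ℝ} (hc : 0 < c) (hμc : μ ≤ c / 2)
    (hμD : μ * (2 * m 2 ^ 2 + c) ≤ (m 0 ^ 2 + m 1 ^ 2) * c) (x : Fin 3 → ℝ) :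
    μ * sq3 x ≤ sq3 (crossProduct m x) + c * (x 0 ^ 2 + x 1 ^ 2) := by
  have hD : 0 < 2 * m 2 ^ 2 + c := by positivity
  have hdefect : 0 ≤ 2 * (m 0 ^ 2 + m 1 ^ 2) * (2 * m 2 ^ 2 + c) *
      (sq3 (crossProduct m x) + c * (x 0 ^ 2 + x 1 ^ 2) - μ * sq3 x) := by
    rw [mul_sq3_crossProduct_add_sub_eq]
    have : 0 ≤ c - 2 * μ := by linarith
    have : 0 ≤ (m 0 ^ 2 + m 1 ^ 2) * c - (2 * m 2 ^ 2 + c) * μ := by linarith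
    positivity
  exact sub_nonneg.mp (nonneg_of_mul_nonneg_right hdefect (by positivity))

theorem stmt6_general (m : Fin 3 → ℝ)
    (hnc : m 0 ^ 2 + m 1 ^ 2 > 0)
    (c : ℝ) (hc : 0 < c) :
    0 < min (c / 2) ((m 0 ^ 2 + m 1 ^ 2) * c / (2 * m 2 ^ 2 + c)) ∧
    ∀ x : Fin 3 → ℝ,
      sq3 (crossProduct m x) + c * (x 0 ^ 2 + x 1 ^ 2) ≥
        min (c / 2) ((m 0 ^ 2 + m 1 ^ 2) * c / (2 * m 2 ^ 2 + c)) * sq3 x := by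
  have hD : 0 < 2 * m 2 ^ 2 + c := by positivity
  refine ⟨lt_min (by positivity) (by positivity), fun x ↦ ?_⟩
  refine mul_sq3_le_sq3_crossProduct_add hnc hc (min_le_left _ _) ?_ x
  exact (le_div_iff₀ hD).mp (min_le_right _ _)

/-- For a unit vector `m ∈ ℝ³` not collinear with `e₃` and `c > 0`:
`|m × x|² + c(x₁² + x₂²) ≥ μ |x|²` with `μ := min(c/2, (m₁²+m₂²)c/(2m₃²+c)) > 0`. -/
theorem stmt6 (m : Fin 3 → ℝ)
    (hm : m 0 ^ 2 + m 1 ^ 2 + m 2 ^ 2 = 1)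
    (hnc : m 0 ^ 2 + m 1 ^ 2 > 0)
    (c : ℝ) (hc : 0 < c) :
    0 < min (c / 2) ((m 0 ^ 2 + m 1 ^ 2) * c / (2 * m 2 ^ 2 + c)) ∧
    ∀ x : Fin 3 → ℝ,
      sq3 (crossProduct m x) + c * (x 0 ^ 2 + x 1 ^ 2) ≥
        min (c / 2) ((m 0 ^ 2 + m 1 ^ 2) * c / (2 * m 2 ^ 2 + c)) * sq3 x :=
  stmt6_general m hnc c hc
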